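/- The group generated by g₁ and g₂ acts transitively on the vertex set Fin 4 × Fin 3 of G: for any two vertices u and w there exists σ in the subgroup generated by g₁ and g₂ with σ u = w. -/

import Mathlib

/-- `g₁`: the product of the disjoint transpositions
`(0,0)↔(1,0)`, `(0,1)↔(1,2)`, `(0,2)↔(1,1)`, `(2,1)↔(2,2)`, `(3,1)↔(3,2)`;
it fixes `(2,0)` and `(3,0)`. -/
def g₁ : Equiv.Perm (Fin 4 × Fin 3) :=
  Equiv.swap (0, 0) (1, 0) * Equiv.swap (0, 1) (1, 2) * Equiv.swap (0, 2) (1, 1) *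
    Equiv.swap (2, 1) (2, 2) * Equiv.swap (3, 1) (3, 2)

/-- The 4-cycle `a → b → c → d → a`. -/
def cyc4 (a b c d : Fin 4 × Fin 3) : Equiv.Perm (Fin 4 × Fin 3) :=
  Equiv.swap a d * Equiv.swap a c * Equiv.swap a b

/-- `g₂`: the product of the disjoint 4-cycles
`(0,0)→(1,2)→(2,0)→(3,2)→(0,0)`, `(1,0)→(2,2)→(3,0)→(0,2)→(1,0)`,
`(0,1)→(1,1)→(2,1)→(3,1)→(0,1)`. -/
def g₂ : Equiv.Perm (Fin 4 × Fin 3) :=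
  cyc4 (0, 0) (1, 2) (2, 0) (3, 2) * cyc4 (1, 0) (2, 2) (3, 0) (0, 2) *
    cyc4 (0, 1) (1, 1) (2, 1) (3, 1)

/-- The `⟨g₂⟩`-orbits are `{(0,0),(1,2),(2,0),(3,2)}`, `{(1,0),(2,2),(3,0),(0,2)}` and
`{(0,1),(1,1),(2,1),(3,1)}`, and `1`, `g₁`, `g₁ * g₂` send `(0,0)` into each of them in turn. -/
lemma exists_g₂_pow_mul_apply_eq (v : Fin 4 × Fin 3) :
    ∃ k : Fin 4, ∃ τ ∈ [1, g₁, g₁ * g₂], (g₂ ^ (k : ℕ) * τ) (0, 0) = v := by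
  revert v
  decide

theorem vertex_transitive (u w : Fin 4 × Fin 3) :
    ∃ σ ∈ Subgroup.closure ({g₁, g₂} : Set (Equiv.Perm (Fin 4 × Fin 3))),
      σ u = w := by
  set H := Subgroup.closure ({g₁, g₂} : Set (Equiv.Perm (Fin 4 × Fin 3)))
  have hg₁ : g₁ ∈ H := Subgroup.subset_closure (by simp)
  have hg₂ : g₂ ∈ H := Subgroup.subset_closure (by simp)
  have : MulAction.IsPretransitive H (Fin 4 × Fin 3) := by
    refine (MulAction.isPretransitive_iff_base (0, 0)).mpr fun v => ?_
    obtain ⟨k, τ, hτ, hv⟩ := exists_g₂_pow_mul_apply_eq v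
    have hτH : τ ∈ H := by
      simp only [List.mem_cons, List.not_mem_nil, or_false] at hτ
      rcases hτ with rfl | rfl | rfl
      exacts [H.one_mem, hg₁, H.mul_mem hg₁ hg₂]
    exact ⟨⟨_, H.mul_mem (H.pow_mem hg₂ k) hτH⟩, hv⟩
  obtain ⟨σ, hσ⟩ := MulAction.exists_smul_eq H u w
  exact ⟨σ, σ.2, hσ⟩
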